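/- Closed-loop gain-difference identity: let P, P̃ be symmetric positive semidefinite m × m matrices with P ≤ P̃, H a d × m matrix, R a d × d symmetric positive definite matrix, F an m × m matrix, and define K = P Hᵀ (H P Hᵀ + R)⁻¹, K̃ = P̃ Hᵀ (H P̃ Hᵀ + R)⁻¹, F_c = (I − K H) F, F̃_c = (I − K̃ H) F. Then F_c − F̃_c = (I + P Hᵀ R⁻¹ H)⁻¹ (P̃ − P) Hᵀ (H P̃ Hᵀ + R)⁻¹ H F. -/

import Mathlib

open Matrix

/-!
Write `S = H P Hᵀ + R`, `S̃ = H P̃ Hᵀ + R`, `K = P Hᵀ S⁻¹`, `K̃ = P̃ Hᵀ S̃⁻¹` and `A = I + P Hᵀ R⁻¹ H`.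
Since `F_c − F̃_c = (K̃ − K) H F`, it suffices to show `A (K̃ − K) = (P̃ − P) Hᵀ S̃⁻¹`.
For any `Q`, substituting `H Q Hᵀ = S_Q − R` gives
`A Q Hᵀ S_Q⁻¹ = (Q − P) Hᵀ S_Q⁻¹ + P Hᵀ R⁻¹`; taking `Q = P̃` and `Q = P` and subtracting
cancels the common term `P Hᵀ R⁻¹`.
-/

namespace Matrix

section

variable {m n α : Type*} [Fintype m] [Fintype n] [DecidableEq m] [DecidableEq n] [CommRing α]

noncomputable def kalmanGain (P : Matrix n n α) (H : Matrix m n α) (R : Matrix m m α) :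
    Matrix n m α :=
  P * Hᵀ * (H * P * Hᵀ + R)⁻¹

theorem one_add_mul_inv_mul_kalmanGain (P Q : Matrix n n α) (H : Matrix m n α)
    {R : Matrix m m α} (hR : IsUnit R) (hS : IsUnit (H * Q * Hᵀ + R)) :
    (1 + P * Hᵀ * R⁻¹ * H) * kalmanGain Q H R =
      (Q - P) * Hᵀ * (H * Q * Hᵀ + R)⁻¹ + P * Hᵀ * R⁻¹ := by
  rw [kalmanGain]
  generalize hSdef : H * Q * Hᵀ + R = S at hS ⊢
  have hRS : P * Hᵀ * R⁻¹ * (H * Q * Hᵀ) * S⁻¹ = P * Hᵀ * R⁻¹ - P * Hᵀ * S⁻¹ := by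
    rw [eq_sub_of_add_eq hSdef, Matrix.mul_sub, Matrix.sub_mul,
      mul_nonsing_inv_cancel_right S _ ((isUnit_iff_isUnit_det S).mp hS),
      nonsing_inv_mul_cancel_right R _ ((isUnit_iff_isUnit_det R).mp hR)]
  calc (1 + P * Hᵀ * R⁻¹ * H) * (Q * Hᵀ * S⁻¹)
      = Q * Hᵀ * S⁻¹ + P * Hᵀ * R⁻¹ * (H * Q * Hᵀ) * S⁻¹ := by
        simp only [Matrix.add_mul, Matrix.one_mul, Matrix.mul_assoc]
    _ = (Q - P) * Hᵀ * S⁻¹ + P * Hᵀ * R⁻¹ := by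
        rw [hRS, Matrix.sub_mul, Matrix.sub_mul]; abel

theorem kalmanGain_sub_kalmanGain (P Q : Matrix n n α) (H : Matrix m n α)
    {R : Matrix m m α} (hR : IsUnit R) (hSP : IsUnit (H * P * Hᵀ + R))
    (hSQ : IsUnit (H * Q * Hᵀ + R)) (hA : IsUnit (1 + P * Hᵀ * R⁻¹ * H)) :
    kalmanGain Q H R - kalmanGain P H R =
      (1 + P * Hᵀ * R⁻¹ * H)⁻¹ * (Q - P) * Hᵀ * (H * Q * Hᵀ + R)⁻¹ := by
  have hdiff : (1 + P * Hᵀ * R⁻¹ * H) * (kalmanGain Q H R - kalmanGain P H R) =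
      (Q - P) * Hᵀ * (H * Q * Hᵀ + R)⁻¹ := by
    rw [Matrix.mul_sub, one_add_mul_inv_mul_kalmanGain P Q H hR hSQ,
      one_add_mul_inv_mul_kalmanGain P P H hR hSP, sub_self, Matrix.zero_mul, Matrix.zero_mul,
      zero_add, add_sub_cancel_right]
  rw [Matrix.mul_assoc, Matrix.mul_assoc, ← Matrix.mul_assoc (Q - P), ← hdiff,
    nonsing_inv_mul_cancel_left _ _ ((isUnit_iff_isUnit_det _).mp hA)]

end

theorem PosSemidef.isUnit_mul_mul_transpose_add {m n : Type*} [Fintype m] [Fintype n]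
    [DecidableEq m] {P : Matrix n n ℝ} (hP : P.PosSemidef) (H : Matrix m n ℝ)
    {R : Matrix m m ℝ} (hR : R.PosDef) : IsUnit (H * P * Hᵀ + R) := by
  have hHPH : (H * P * Hᵀ).PosSemidef := by
    simpa only [conjTranspose_eq_transpose_of_trivial] using hP.mul_mul_conjTranspose_same H
  exact (PosDef.posSemidef_add hHPH hR).isUnit

end Matrix

theorem closed_loop_gain_difference_general {m d : ℕ}
    (P Ptil : Matrix (Fin m) (Fin m) ℝ)
    (hP : P.PosSemidef) (hPtil : Ptil.PosSemidef)
    (H : Matrix (Fin d) (Fin m) ℝ)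
    (R : Matrix (Fin d) (Fin d) ℝ) (hR : R.PosDef)
    (F : Matrix (Fin m) (Fin m) ℝ)
    (hu : IsUnit (1 + P * Hᵀ * R⁻¹ * H)) :
    (1 - P * Hᵀ * (H * P * Hᵀ + R)⁻¹ * H) * F -
      (1 - Ptil * Hᵀ * (H * Ptil * Hᵀ + R)⁻¹ * H) * F =
    (1 + P * Hᵀ * R⁻¹ * H)⁻¹ * (Ptil - P) * Hᵀ * (H * Ptil * Hᵀ + R)⁻¹ * H * F := by
  have hgain := kalmanGain_sub_kalmanGain P Ptil H hR.isUnit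
    (hP.isUnit_mul_mul_transpose_add H hR) (hPtil.isUnit_mul_mul_transpose_add H hR) hu
  calc (1 - kalmanGain P H R * H) * F - (1 - kalmanGain Ptil H R * H) * F
      = (kalmanGain Ptil H R - kalmanGain P H R) * H * F := by
        simp only [Matrix.sub_mul, Matrix.one_mul]; abel
    _ = _ := by rw [hgain]

/-- Closed-loop gain-difference identity: with
`F_c = (I − P Hᵀ (H P Hᵀ + R)⁻¹ H) F` and `F̃_c` defined analogously with `P̃`,
`F_c − F̃_c = (I + P Hᵀ R⁻¹ H)⁻¹ (P̃ − P) Hᵀ (H P̃ Hᵀ + R)⁻¹ H F`. -/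
theorem closed_loop_gain_difference {m d : ℕ}
    (P Ptil : Matrix (Fin m) (Fin m) ℝ)
    (hP : P.PosSemidef) (hPtil : Ptil.PosSemidef)
    (hle : (Ptil - P).PosSemidef)
    (H : Matrix (Fin d) (Fin m) ℝ)
    (R : Matrix (Fin d) (Fin d) ℝ) (hR : R.PosDef)
    (F : Matrix (Fin m) (Fin m) ℝ)
    (hu : IsUnit (1 + P * Hᵀ * R⁻¹ * H)) :
    (1 - P * Hᵀ * (H * P * Hᵀ + R)⁻¹ * H) * F -
      (1 - Ptil * Hᵀ * (H * Ptil * Hᵀ + R)⁻¹ * H) * F =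
    (1 + P * Hᵀ * R⁻¹ * H)⁻¹ * (Ptil - P) * Hᵀ * (H * Ptil * Hᵀ + R)⁻¹ * H * F :=
  closed_loop_gain_difference_general P Ptil hP hPtil H R hR F hu
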